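/- arXiv:2207.13493 — 6 statements merged into one kernel-verified Lean document; each statement's English description precedes it below -/
import Mathlib

section
/- Let X ∈ ℝ^{n×d} with n > d ≥ 1, and suppose there exist d rows of X all lying on an affine hyperplane H = { y ∈ ℝ^d : vᵀy = c } whose normal vector v ∈ ℝ^d has all components nonzero. Then there exists a matrix X' that differs from X in at most ⌈(n−d)/d⌉ entries in each column, such that every row of X' lies on H; consequently the sample covariance matrix of X', namely (1/n) ∑_{i=1}^n (x'_i − x̄')(x'_i − x̄')ᵀ with x̄' the mean of the rows x'_i of X', is singular. -/
/-!
Distribute the `n - d` rows off `H` round-robin over the `d` coordinates and move each of them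
onto `H` by changing only the coordinate it is assigned to; this is possible because `H` is not
parallel to any coordinate axis, and no column receives more than `⌈(n - d) / d⌉` of them.
Once every row, and hence the mean, lies on `H`, every centred row is orthogonal to the normal
`v`, so `v` is in the kernel of the covariance matrix.
-/

open Matrix Finset

section Covariance

variable {ι m K : Type*} [Fintype ι] [Fintype m] [Field K]

theorem sum_vecMulVec_self_mulVec_eq_zero {u : ι → m → K} {v : m → K}
    (h : ∀ i, u i ⬝ᵥ v = 0) : (∑ i, vecMulVec (u i) (u i)) *ᵥ v = 0 := by
  simp [sum_mulVec, vecMulVec_mulVec, h]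

theorem dotProduct_centroid_eq [Nonempty ι] {X : ι → m → K} {v : m → K} {c : K}
    [CharZero K] (hX : ∀ i, v ⬝ᵥ X i = c) :
    v ⬝ᵥ ((1 / (Fintype.card ι : K)) • ∑ k, X k) = c := by
  simp [dotProduct_sum, hX]

theorem det_smul_sum_vecMulVec_sub_eq_zero [DecidableEq m] {X : ι → m → K} {μ v : m → K}
    {c : K} (a : K) (hv : v ≠ 0) (hX : ∀ i, v ⬝ᵥ X i = c) (hμ : v ⬝ᵥ μ = c) :
    (a • ∑ i, vecMulVec (X i - μ) (X i - μ)).det = 0 := by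
  refine exists_mulVec_eq_zero_iff.mp ⟨v, hv, ?_⟩
  rw [smul_mulVec, sum_vecMulVec_self_mulVec_eq_zero, smul_zero]
  intro i
  rw [dotProduct_comm, dotProduct_sub, hX, hμ, sub_self]

end Covariance

section MoveOntoHyperplane

variable {m K : Type*} [Fintype m] [DecidableEq m] [Field K]

def moveOntoHyperplane (v : m → K) (c : K) (j : m) (x : m → K) : m → K :=
  x + Pi.single j ((c - v ⬝ᵥ x) / v j)

theorem dotProduct_moveOntoHyperplane {v : m → K} (c : K) {j : m} (hj : v j ≠ 0) (x : m → K) :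
    v ⬝ᵥ moveOntoHyperplane v c j x = c := by
  rw [moveOntoHyperplane, dotProduct_add, dotProduct_single, mul_div_cancel₀ _ hj,
    add_sub_cancel]

theorem moveOntoHyperplane_apply_of_ne (v : m → K) (c : K) {j k : m} (hk : k ≠ j) (x : m → K) :
    moveOntoHyperplane v c j x k = x k := by
  simp [moveOntoHyperplane, hk]

end MoveOntoHyperplane

section RoundRobin

theorem card_filter_mod_eq_le_ceil {n d : ℕ} (hd : 0 < d) (j : ℕ) :
    #{k ∈ range n | k % d = j} ≤ ⌈(n : ℝ) / d⌉₊ := by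
  rw [← card_range ⌈(n : ℝ) / d⌉₊]
  refine card_le_card_of_injOn (· / d) (fun k hk ↦ ?_) (fun k hk k' hk' hdiv ↦ ?_)
  · simp only [coe_filter, mem_range, Set.mem_ofPred_eq] at hk
    rw [coe_range, Set.mem_Iio, Nat.lt_ceil]
    calc ((k / d : ℕ) : ℝ) ≤ k / d := Nat.cast_div_le
      _ < n / d := by gcongr; exact_mod_cast hk.1
  · simp only [coe_filter, Set.mem_ofPred_eq] at hk hk'
    rw [← Nat.div_add_mod k d, ← Nat.div_add_mod k' d, hk.2, hk'.2]
    exact congrArg (d * · + j) hdiv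

theorem Finset.exists_card_filter_eq_le_ceil {α : Type*} (S : Finset α) {d : ℕ} (hd : 0 < d) :
    ∃ σ : α → Fin d, ∀ j, #{i ∈ S | σ i = j} ≤ ⌈(#S : ℝ) / d⌉₊ := by
  classical
  let f : α → ℕ := fun i ↦ if h : i ∈ S then S.equivFin ⟨i, h⟩ else 0
  have hf : ∀ i (h : i ∈ S), f i = S.equivFin ⟨i, h⟩ := fun i h ↦ dif_pos h
  refine ⟨fun i ↦ ⟨f i % d, Nat.mod_lt _ hd⟩, fun j ↦ ?_⟩
  refine (card_le_card_of_injOn f (fun i hi ↦ ?_) (fun i hi i' hi' h ↦ ?_)).trans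
    (card_filter_mod_eq_le_ceil hd j)
  · simp only [coe_filter, Set.mem_ofPred_eq, Fin.ext_iff] at hi
    simpa [hf i hi.1] using hi.2
  · simp only [coe_filter, Set.mem_ofPred_eq] at hi hi'
    rw [hf i hi.1, hf i' hi'.1, Fin.val_inj, S.equivFin.apply_eq_iff_eq, Subtype.mk.injEq] at h
    exact h

end RoundRobin

theorem stmt_3_general {n d : ℕ} (hd : 1 ≤ d)
    (X : Fin n → Fin d → ℝ) (v : Fin d → ℝ) (c : ℝ)
    (hv : ∀ j, v j ≠ 0)
    (T : Finset (Fin n)) (hT : T.card = d) (hTX : ∀ i ∈ T, v ⬝ᵥ X i = c) :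
    ∃ X' : Fin n → Fin d → ℝ,
      (∀ j : Fin d, {i : Fin n | X' i j ≠ X i j}.ncard ≤ ⌈((n : ℝ) - d) / d⌉₊) ∧
      (∀ i : Fin n, v ⬝ᵥ X' i = c) ∧
      ((1 / (n : ℝ)) • ∑ i, vecMulVec
          (X' i - (1 / (n : ℝ)) • ∑ k, X' k)
          (X' i - (1 / (n : ℝ)) • ∑ k, X' k)).det = 0 := by
  classical
  have hdn : d ≤ n := by simpa [hT] using T.card_le_univ
  obtain ⟨σ, hσ⟩ := Tᶜ.exists_card_filter_eq_le_ceil hd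
  let X' i := if i ∈ T then X i else moveOntoHyperplane v c (σ i) (X i)
  have hX' : ∀ i, v ⬝ᵥ X' i = c := fun i ↦ by
    by_cases hi : i ∈ T
    · simp [X', hi, hTX]
    · simp [X', hi, dotProduct_moveOntoHyperplane c (hv _)]
  refine ⟨X', fun j ↦ ?_, hX', ?_⟩
  · have hchanged : {i | X' i j ≠ X i j} ⊆ ↑{i ∈ Tᶜ | σ i = j} := fun i hi ↦ by
      have hiT : i ∉ T := fun h ↦ hi (by simp [X', h])
      refine mem_filter.mpr ⟨mem_compl.mpr hiT, by_contra fun hσi ↦ hi ?_⟩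
      simp [X', hiT, moveOntoHyperplane_apply_of_ne v c (Ne.symm hσi)]
    have hcard : ((#Tᶜ : ℕ) : ℝ) = n - d := by
      rw [card_compl, hT, Fintype.card_fin, Nat.cast_sub hdn]
    calc {i | X' i j ≠ X i j}.ncard ≤ #{i ∈ Tᶜ | σ i = j} :=
          (Set.ncard_le_ncard hchanged).trans_eq (Set.ncard_coe_finset _)
      _ ≤ ⌈((n : ℝ) - d) / d⌉₊ := hcard ▸ hσ j
  · have : Nonempty (Fin n) := ⟨⟨0, by omega⟩⟩
    refine det_smul_sum_vecMulVec_sub_eq_zero _ (fun h ↦ hv ⟨0, hd⟩ (by simp [h])) hX' ?_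
    simpa using dotProduct_centroid_eq hX'

/-- If `d` rows of `X` lie on an affine hyperplane `{y | vᵀ y = c}` whose normal
vector has all components nonzero, then by changing at most `⌈(n-d)/d⌉` entries in
each column one obtains a dataset `X'` all of whose rows lie on that hyperplane,
whose sample covariance matrix is therefore singular. -/
theorem stmt_3 {n d : ℕ} (hd : 1 ≤ d) (hnd : d < n)
    (X : Fin n → Fin d → ℝ) (v : Fin d → ℝ) (c : ℝ)
    (hv : ∀ j, v j ≠ 0)
    (T : Finset (Fin n)) (hT : T.card = d) (hTX : ∀ i ∈ T, v ⬝ᵥ X i = c) :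
    ∃ X' : Fin n → Fin d → ℝ,
      (∀ j : Fin d, {i : Fin n | X' i j ≠ X i j}.ncard ≤ ⌈((n : ℝ) - d) / d⌉₊) ∧
      (∀ i : Fin n, v ⬝ᵥ X' i = c) ∧
      ((1 / (n : ℝ)) • ∑ i, vecMulVec
          (X' i - (1 / (n : ℝ)) • ∑ k, X' k)
          (X' i - (1 / (n : ℝ)) • ∑ k, X' k)).det = 0 :=
  stmt_3_general hd X v c hv T hT hTX
end

section
/- Let Σ be a symmetric positive definite d×d matrix, x, μ ∈ ℝ^d, and let S be a nonempty subset of {1,…,d}. Then the partial squared Mahalanobis distance on S is bounded by the full one: (x_S − μ_S)ᵀ (Σ_{SS})^{-1} (x_S − μ_S) ≤ (x − μ)ᵀ Σ^{-1} (x − μ), where x_S, μ_S are the restrictions of x, μ to the coordinates in S and Σ_{SS} is the principal submatrix of Σ with rows and columns in S. -/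
open Matrix

/-!
Completing the square in the inner product `⟨u, v⟩_A = uᵀ A v` gives, for every `u`,
`2 uᵀw − uᵀAu ≤ wᵀA⁻¹w`, with equality at `u = A⁻¹w`. So `wᵀA⁻¹w` is a supremum over all `u`, and
restricting to `u = P c` (for `S`: the vectors supported on `S`) leaves the supremum
`(Pᵀw)ᵀ (PᵀAP)⁻¹ (Pᵀw)`, attained at `c = (PᵀAP)⁻¹ Pᵀw`.
-/

namespace Matrix

variable {n m : Type*} [Fintype n] [Fintype m] [DecidableEq n] [DecidableEq m]

lemma PosDef.two_mul_dotProduct_sub_le {A : Matrix n n ℝ} (hA : A.PosDef) (u w : n → ℝ) :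
    2 * (u ⬝ᵥ w) - u ⬝ᵥ (A *ᵥ u) ≤ w ⬝ᵥ (A⁻¹ *ᵥ w) := by
  set z := A⁻¹ *ᵥ w
  have hAz : A *ᵥ z = w := by
    rw [mulVec_mulVec, mul_nonsing_inv _ hA.det_pos.ne'.isUnit, one_mulVec]
  have hAT : Aᵀ = A := by simpa using hA.isHermitian.eq
  have hzAu : z ⬝ᵥ (A *ᵥ u) = u ⬝ᵥ w := by
    rw [dotProduct_mulVec, ← mulVec_transpose, hAT, hAz, dotProduct_comm]
  have hsq : 0 ≤ (u - z) ⬝ᵥ (A *ᵥ (u - z)) := by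
    simpa using hA.posSemidef.dotProduct_mulVec_nonneg (u - z)
  rw [mulVec_sub, sub_dotProduct, dotProduct_sub, dotProduct_sub, hAz, hzAu] at hsq
  linarith [dotProduct_comm z w]

lemma PosDef.dotProduct_inv_transpose_mul_mul_le {A : Matrix n n ℝ} (hA : A.PosDef)
    (P : Matrix n m ℝ) (w : n → ℝ) :
    (Pᵀ *ᵥ w) ⬝ᵥ ((Pᵀ * A * P)⁻¹ *ᵥ (Pᵀ *ᵥ w)) ≤ w ⬝ᵥ (A⁻¹ *ᵥ w) := by
  set B := Pᵀ * A * P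
  set v := Pᵀ *ᵥ w
  by_cases hB : IsUnit B.det
  · set c := B⁻¹ *ᵥ v
    have hBc : B *ᵥ c = v := by
      rw [mulVec_mulVec, mul_nonsing_inv _ hB, one_mulVec]
    have hlin : (P *ᵥ c) ⬝ᵥ w = c ⬝ᵥ v := by
      rw [dotProduct_comm, dotProduct_mulVec, ← mulVec_transpose, dotProduct_comm]
    have hquad : (P *ᵥ c) ⬝ᵥ (A *ᵥ (P *ᵥ c)) = c ⬝ᵥ v := by
      rw [dotProduct_comm, dotProduct_mulVec, ← mulVec_transpose, mulVec_mulVec, mulVec_mulVec,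
        dotProduct_comm]
      exact congrArg (c ⬝ᵥ ·) hBc
    have key := hA.two_mul_dotProduct_sub_le (P *ᵥ c) w
    rw [hlin, hquad] at key
    rw [dotProduct_comm]
    linarith
  · rw [nonsing_inv_apply_not_isUnit _ hB, zero_mulVec, dotProduct_zero]
    simpa using hA.inv.posSemidef.dotProduct_mulVec_nonneg w

omit [Fintype m] [DecidableEq m] in
lemma submatrix_eq_transpose_mul_mul {R : Type*} [CommSemiring R] (A : Matrix n n R)
    (e : m → n) :
    A.submatrix e e =
      ((1 : Matrix n n R).submatrix id e)ᵀ * A * (1 : Matrix n n R).submatrix id e := by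
  ext i j
  simp [mul_apply, one_apply]

omit [Fintype m] [DecidableEq m] in
lemma comp_eq_transpose_mulVec {R : Type*} [CommSemiring R] (w : n → R) (e : m → n) :
    w ∘ e = ((1 : Matrix n n R).submatrix id e)ᵀ *ᵥ w := by
  ext i
  simp [mulVec, dotProduct, one_apply]

lemma PosDef.dotProduct_inv_submatrix_le {A : Matrix n n ℝ} (hA : A.PosDef) (e : m → n)
    (w : n → ℝ) :
    (w ∘ e) ⬝ᵥ ((A.submatrix e e)⁻¹ *ᵥ (w ∘ e)) ≤ w ⬝ᵥ (A⁻¹ *ᵥ w) := by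
  rw [submatrix_eq_transpose_mul_mul, comp_eq_transpose_mulVec]
  exact hA.dotProduct_inv_transpose_mul_mul_le _ w

end Matrix

theorem stmt_6_general {d : ℕ} (A : Matrix (Fin d) (Fin d) ℝ) (hA : A.PosDef)
    (x μ : Fin d → ℝ) (S : Finset (Fin d)) :
    (fun i : ↥S => x i.val - μ i.val) ⬝ᵥ
        ((A.submatrix (fun i : ↥S => i.val) (fun i : ↥S => i.val))⁻¹).mulVec
          (fun i : ↥S => x i.val - μ i.val)
      ≤ (x - μ) ⬝ᵥ (A⁻¹).mulVec (x - μ) :=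
  hA.dotProduct_inv_submatrix_le Subtype.val (x - μ)

/-- The partial squared Mahalanobis distance on a nonempty subset `S` of the
coordinates is bounded above by the full squared Mahalanobis distance. -/
theorem stmt_6 {d : ℕ} (A : Matrix (Fin d) (Fin d) ℝ) (hA : A.PosDef)
    (x μ : Fin d → ℝ) (S : Finset (Fin d)) (hS : S.Nonempty) :
    (fun i : ↥S => x i.val - μ i.val) ⬝ᵥ
        ((A.submatrix (fun i : ↥S => i.val) (fun i : ↥S => i.val))⁻¹).mulVec
          (fun i : ↥S => x i.val - μ i.val)
      ≤ (x - μ) ⬝ᵥ (A⁻¹).mulVec (x - μ) :=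
  stmt_6_general A hA x μ S
end

section
/- Let Σ be a symmetric positive definite d×d matrix with λ_d(Σ) ≥ a for some 0 < a ≤ 1, and let W ∈ {0,1}^{n×d} be such that every column of W contains at least one entry equal to 1. For row i, write w_i ∈ {0,1}^d and let Σ^{(w_i)} be the principal submatrix of Σ on the set {j : w_{ij} = 1}, with the convention det Σ^{(w_i)} = 1 when w_i is the zero vector. Then ∑_{i=1}^n ln det Σ^{(w_i)} ≥ ln( λ₁(Σ)/d ) + (nd − 1) ln a, where λ₁(Σ) is the largest eigenvalue of Σ. -/
open Matrix

/-- The largest eigenvalue `λ₁` of a symmetric matrix, as the supremum of the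
Rayleigh quotient over unit vectors. -/
noncomputable def lamMax {d : ℕ} (A : Matrix (Fin d) (Fin d) ℝ) : ℝ :=
  sSup {r : ℝ | ∃ v : Fin d → ℝ, v ⬝ᵥ v = 1 ∧ r = v ⬝ᵥ A.mulVec v}

/-!
Write `M_s` for the principal submatrix of `A` on `s`. The hypothesis says that `A - a • 1` is
positive semidefinite, hence so is each `M_s - a • 1`: all eigenvalues of `M_s` are at least `a`,
and `log det M_s ≥ |s| log a ≥ d log a` because `log a ≤ 0`. Pick `j` maximising `A j j` and a row
`i₀` containing `j`. A diagonal entry of a Hermitian matrix is a convex combination of its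
eigenvalues, so the largest eigenvalue of `M_{W i₀}` is at least `A j j`, which improves the bound
for that row to `log (A j j) + (d - 1) log a`. Finally `λ₁(A) ≤ d · A j j`, since every entry of a
positive semidefinite matrix satisfies `A p q ^ 2 ≤ A p p * A q q ≤ (A j j) ^ 2`.
-/

open scoped ComplexOrder

namespace Matrix

namespace IsHermitian

variable {𝕜 ι : Type*} [RCLike 𝕜] [Fintype ι] [DecidableEq ι] {M : Matrix ι ι 𝕜}

lemma diag_eq_sum_eigenvalues_mul (hM : M.IsHermitian) (j : ι) :
    M j j = ∑ k, (hM.eigenvalues k : 𝕜) *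
      (‖(hM.eigenvectorUnitary : Matrix ι ι 𝕜) j k‖ ^ 2 : ℝ) := by
  conv_lhs => rw [hM.spectral_theorem, Unitary.conjStarAlgAut_apply, mul_apply]
  simp only [mul_diagonal, star_apply, Function.comp_apply, RCLike.star_def]
  refine Finset.sum_congr rfl fun k _ => ?_
  rw [RCLike.ofReal_pow, ← RCLike.mul_conj]
  ring

lemma sum_norm_eigenvectorUnitary_sq (hM : M.IsHermitian) (j : ι) :
    ∑ k, ‖(hM.eigenvectorUnitary : Matrix ι ι 𝕜) j k‖ ^ 2 = 1 := by
  have h := congrFun (congrFun (mem_unitaryGroup_iff.mp hM.eigenvectorUnitary.2) j) j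
  simp only [mul_apply, star_apply, RCLike.star_def, RCLike.mul_conj, one_apply_eq] at h
  exact_mod_cast h

lemma exists_re_diag_le_eigenvalues (hM : M.IsHermitian) (j : ι) :
    ∃ k, RCLike.re (M j j) ≤ hM.eigenvalues k := by
  obtain ⟨k, -, hk⟩ := Finset.exists_max_image Finset.univ hM.eigenvalues ⟨j, Finset.mem_univ j⟩
  refine ⟨k, ?_⟩
  calc RCLike.re (M j j)
      = ∑ l, hM.eigenvalues l * ‖(hM.eigenvectorUnitary : Matrix ι ι 𝕜) j l‖ ^ 2 := by
        rw [hM.diag_eq_sum_eigenvalues_mul j]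
        simp only [map_sum, ← RCLike.ofReal_mul, RCLike.ofReal_re]
    _ ≤ ∑ l, hM.eigenvalues k * ‖(hM.eigenvectorUnitary : Matrix ι ι 𝕜) j l‖ ^ 2 := by
        gcongr with l; exact hk l (Finset.mem_univ l)
    _ = hM.eigenvalues k := by rw [← Finset.mul_sum, hM.sum_norm_eigenvectorUnitary_sq, mul_one]

lemma le_eigenvalues_of_posSemidef_sub_smul_one (hM : M.IsHermitian) {a : ℝ}
    (h : (M - a • 1).PosSemidef) (k : ι) : a ≤ hM.eigenvalues k := by
  have hv := h.re_dotProduct_nonneg (hM.eigenvectorBasis k)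
  have hnorm : star ⇑(hM.eigenvectorBasis k) ⬝ᵥ ⇑(hM.eigenvectorBasis k) = 1 := by
    rw [dotProduct_comm, ← EuclideanSpace.inner_eq_star_dotProduct, inner_self_eq_norm_sq_to_K,
      hM.eigenvectorBasis.orthonormal.1 k]
    simp
  rw [sub_mulVec, dotProduct_sub, smul_mulVec, one_mulVec, dotProduct_smul, hnorm, map_sub,
    ← hM.eigenvalues_eq k] at hv
  simpa [RCLike.smul_re] using hv

end IsHermitian

section Real

variable {ι : Type*} [Fintype ι] [DecidableEq ι] {M : Matrix ι ι ℝ} {a : ℝ}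

lemma posSemidef_sub_smul_one_of_le (hM : M.IsHermitian)
    (h : ∀ v : ι → ℝ, a * (v ⬝ᵥ v) ≤ v ⬝ᵥ M *ᵥ v) : (M - a • 1).PosSemidef := by
  refine .of_dotProduct_mulVec_nonneg (hM.sub (isHermitian_one.smul (.all a))) fun v => ?_
  rw [star_trivial, sub_mulVec, dotProduct_sub, smul_mulVec, one_mulVec, dotProduct_smul,
    smul_eq_mul]
  exact sub_nonneg.mpr (h v)

omit [Fintype ι] in
lemma PosSemidef.submatrix_sub_smul_one {κ : Type*} [DecidableEq κ] {e : κ → ι}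
    (h : (M - a • 1).PosSemidef) (he : Function.Injective e) :
    (M.submatrix e e - a • 1).PosSemidef := by
  simpa [submatrix_sub, submatrix_smul, submatrix_one _ he] using h.submatrix e

lemma pow_card_le_det (hM : M.IsHermitian) (h : (M - a • 1).PosSemidef) (ha : 0 ≤ a) :
    a ^ Fintype.card ι ≤ M.det := by
  rw [hM.det_eq_prod_eigenvalues, ← Finset.card_univ, ← Finset.prod_const]
  exact Finset.prod_le_prod (fun _ _ => ha)
    (fun k _ => hM.le_eigenvalues_of_posSemidef_sub_smul_one h k)

lemma diag_mul_pow_le_det (hM : M.IsHermitian) (h : (M - a • 1).PosSemidef) (ha : 0 ≤ a)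
    (j : ι) : M j j * a ^ (Fintype.card ι - 1) ≤ M.det := by
  have hle := hM.le_eigenvalues_of_posSemidef_sub_smul_one h
  obtain ⟨k, hk⟩ := hM.exists_re_diag_le_eigenvalues j
  rw [hM.det_eq_prod_eigenvalues, ← Finset.mul_prod_erase _ _ (Finset.mem_univ k)]
  have hrest : a ^ (Fintype.card ι - 1) ≤ ∏ l ∈ Finset.univ.erase k, hM.eigenvalues l := by
    simpa [Finset.card_erase_of_mem] using
      Finset.prod_le_prod (s := Finset.univ.erase k) (fun _ _ => ha) (fun l _ => hle l)
  simp only [RCLike.ofReal_real_eq_id, id_eq]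
  exact mul_le_mul (by simpa using hk) hrest (by positivity) (ha.trans (hle k))

end Real

section Submatrix

variable {ι : Type*} [DecidableEq ι] {A : Matrix ι ι ℝ} {a : ℝ}

open Real

lemma card_mul_log_le_log_det_submatrix (hA : A.IsHermitian) (h : (A - a • 1).PosSemidef)
    (ha : 0 < a) (s : Finset ι) :
    s.card * log a ≤ log (A.submatrix (fun k : s => k.val) (fun k : s => k.val)).det := by
  have hdet := pow_card_le_det (hA.submatrix _)
    (h.submatrix_sub_smul_one (e := fun k : s => k.val) Subtype.val_injective) ha.le
  rw [Fintype.card_coe] at hdet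
  rw [← log_pow]
  exact log_le_log (by positivity) hdet

lemma log_diag_add_le_log_det_submatrix (hA : A.IsHermitian) (h : (A - a • 1).PosSemidef)
    (ha : 0 < a) {s : Finset ι} {j : ι} (hj : j ∈ s) :
    log (A j j) + (s.card - 1) * log a
      ≤ log (A.submatrix (fun k : s => k.val) (fun k : s => k.val)).det := by
  have hdet := diag_mul_pow_le_det (hA.submatrix _)
    (h.submatrix_sub_smul_one (e := fun k : s => k.val) Subtype.val_injective) ha.le ⟨j, hj⟩
  rw [Fintype.card_coe, submatrix_apply] at hdet
  have hAj : 0 < A j j := ha.trans_le (by simpa using h.diag_nonneg (i := j))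
  rw [← Nat.cast_pred (Finset.card_pos.mpr ⟨j, hj⟩), ← log_pow, ← log_mul hAj.ne' (by positivity)]
  exact log_le_log (by positivity) hdet

end Submatrix

section Rayleigh

variable {ι : Type*} {A : Matrix ι ι ℝ}

lemma PosSemidef.sq_apply_le (hA : A.PosSemidef) (i j : ι) : A i j ^ 2 ≤ A i i * A j j := by
  have h := (hA.submatrix ![i, j]).det_nonneg
  have hji : A j i = A i j := by simpa using hA.isHermitian.apply i j
  rw [det_fin_two] at h
  simp only [submatrix_apply, Matrix.cons_val_zero, Matrix.cons_val_one, hji] at h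
  nlinarith

lemma PosSemidef.abs_apply_le (hA : A.PosSemidef) {c : ℝ} (hc : ∀ i, A i i ≤ c) (i j : ι) :
    |A i j| ≤ c := by
  have hc0 : 0 ≤ c := hA.diag_nonneg.trans (hc i)
  refine abs_le_of_sq_le_sq ((hA.sq_apply_le i j).trans ?_) hc0
  rw [sq]
  exact mul_le_mul (hc i) (hc j) hA.diag_nonneg hc0

lemma dotProduct_mulVec_le_of_abs_le [Fintype ι] {c : ℝ} (h : ∀ i j, |A i j| ≤ c)
    (v : ι → ℝ) :
    v ⬝ᵥ A *ᵥ v ≤ Fintype.card ι * c * (v ⬝ᵥ v) := by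
  rcases isEmpty_or_nonempty ι with hι | ⟨⟨i⟩⟩
  · simp [dotProduct]
  have hc : 0 ≤ c := (abs_nonneg _).trans (h i i)
  calc v ⬝ᵥ A *ᵥ v = ∑ p, ∑ q, v p * A p q * v q := by
        simp only [dotProduct, mulVec, Finset.mul_sum, mul_assoc]
    _ ≤ ∑ p, ∑ q, |v p| * c * |v q| := by
        refine Finset.sum_le_sum fun p _ => Finset.sum_le_sum fun q _ => (le_abs_self _).trans ?_
        rw [abs_mul, abs_mul]
        gcongr
        exact h p q
    _ = c * (∑ p, |v p|) ^ 2 := by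
        rw [sq, Finset.sum_mul_sum, Finset.mul_sum]
        refine Finset.sum_congr rfl fun p _ => ?_
        rw [Finset.mul_sum]
        exact Finset.sum_congr rfl fun q _ => by ring
    _ ≤ c * (Fintype.card ι * ∑ p, |v p| ^ 2) := by
        gcongr
        exact sq_sum_le_card_mul_sum_sq
    _ = Fintype.card ι * c * (v ⬝ᵥ v) := by
        simp only [sq_abs]
        simp only [dotProduct, sq]
        ring

end Rayleigh

end Matrix

section LamMax

variable {d : ℕ} (A : Matrix (Fin d) (Fin d) ℝ)

lemma bddAbove_rayleigh :
    BddAbove {r : ℝ | ∃ v : Fin d → ℝ, v ⬝ᵥ v = 1 ∧ r = v ⬝ᵥ A.mulVec v} := by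
  obtain ⟨c, hc⟩ := Finite.exists_le fun p : Fin d × Fin d => |A p.1 p.2|
  refine ⟨d * c, ?_⟩
  rintro r ⟨v, hv, rfl⟩
  simpa [hv] using dotProduct_mulVec_le_of_abs_le (fun i j => hc (i, j)) v

lemma diag_le_lamMax (j : Fin d) : A j j ≤ lamMax A :=
  le_csSup (bddAbove_rayleigh A) ⟨Pi.single j 1, by simp, by simp⟩

variable {A}

lemma Matrix.PosSemidef.lamMax_le (hA : A.PosSemidef) {c : ℝ} (hc : ∀ i, A i i ≤ c) :
    lamMax A ≤ d * c := by
  refine Real.sSup_le ?_ ?_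
  · rintro r ⟨v, hv, rfl⟩
    simpa [hv] using dotProduct_mulVec_le_of_abs_le (hA.abs_apply_le hc) v
  · rcases d.eq_zero_or_pos with rfl | hd
    · simp
    · exact mul_nonneg d.cast_nonneg (hA.diag_nonneg.trans (hc ⟨0, hd⟩))

end LamMax

/-- Let `A` be symmetric positive definite with smallest eigenvalue at least
`a ∈ (0,1]` (Rayleigh-quotient form), and let `W` select for each row `i` a subset
`W i` of the columns (the cells with weight 1), such that every column is selected
in at least one row.  Then the sum over the rows of the log-determinants of the
corresponding principal submatrices of `A` is at least
`ln(λ₁(A)/d) + (nd − 1) ln a`.  (For an empty `W i` the submatrix is the empty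
matrix, whose determinant is `1` by convention.) -/
theorem stmt_9 {n d : ℕ} (hd : 0 < d)
    (A : Matrix (Fin d) (Fin d) ℝ) (hA : A.PosDef)
    (a : ℝ) (ha0 : 0 < a) (ha1 : a ≤ 1)
    (hmin : ∀ v : Fin d → ℝ, a * (v ⬝ᵥ v) ≤ v ⬝ᵥ A.mulVec v)
    (W : Fin n → Finset (Fin d))
    (hW : ∀ j : Fin d, ∃ i : Fin n, j ∈ W i) :
    Real.log (lamMax A / d) + ((n : ℝ) * d - 1) * Real.log a
      ≤ ∑ i, Real.log
          (A.submatrix (fun k : ↥(W i) => k.val) (fun k : ↥(W i) => k.val)).det := by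
  set logDet : Fin n → ℝ := fun i =>
    Real.log (A.submatrix (fun k : ↥(W i) => k.val) (fun k : ↥(W i) => k.val)).det
  have hAa := posSemidef_sub_smul_one_of_le hA.isHermitian hmin
  obtain ⟨j, -, hj⟩ :=
    Finset.exists_max_image Finset.univ (fun j => A j j) ⟨⟨0, hd⟩, Finset.mem_univ _⟩
  obtain ⟨i₀, hi₀⟩ := hW j
  have hd' : (0 : ℝ) < d := by exact_mod_cast hd
  have haj : a ≤ A j j := by simpa using hAa.diag_nonneg (i := j)
  have hlam : lamMax A / d ≤ A j j :=
    (div_le_iff₀' hd').2 (hA.posSemidef.lamMax_le fun i => hj i (Finset.mem_univ i))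
  have hlam_pos : 0 < lamMax A / d := div_pos (ha0.trans_le (haj.trans (diag_le_lamMax A j))) hd'
  have hloga : Real.log a ≤ 0 := Real.log_nonpos ha0.le ha1
  have hcard (i : Fin n) : ((W i).card : ℝ) ≤ d := by simpa using Finset.card_le_univ (W i)
  have hrow (i : Fin n) : d * Real.log a ≤ logDet i :=
    (mul_le_mul_of_nonpos_right (hcard i) hloga).trans
      (card_mul_log_le_log_det_submatrix hA.isHermitian hAa ha0 (W i))
  have hrow₀ : Real.log (lamMax A / d) + (d - 1) * Real.log a ≤ logDet i₀ := by
    refine le_trans ?_ (log_diag_add_le_log_det_submatrix hA.isHermitian hAa ha0 hi₀)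
    gcongr ?_ + ?_
    · exact Real.log_le_log hlam_pos hlam
    · exact mul_le_mul_of_nonpos_right (by linarith [hcard i₀]) hloga
  calc Real.log (lamMax A / d) + (n * d - 1) * Real.log a
      = ∑ i, (d * Real.log a + if i = i₀ then Real.log (lamMax A / d) - Real.log a else 0) := by
        simp only [Finset.sum_add_distrib, Finset.sum_const, Finset.card_univ, Fintype.card_fin,
          nsmul_eq_mul, Finset.sum_ite_eq', Finset.mem_univ, ↓reduceIte]
        ring
    _ ≤ ∑ i, logDet i := Finset.sum_le_sum fun i _ => by
        split_ifs with h
        · subst h; linarith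
        · simpa using hrow i
end

section
/- Fix penalties q ∈ ℝ^d, μ ∈ ℝ^d, and a symmetric positive definite d×d matrix Σ, and define ℓ_w and g_{μ,Σ} as below. Suppose there exists δ > 0 such that for every x with ‖x − μ‖ < δ, the minimum in g_{μ,Σ}(x) = min_{w ∈ {0,1}^d} ℓ_w(x, μ, Σ) is attained only at the all-ones vector w = (1,…,1). Then x = μ is the unique minimizer of g_{μ,Σ} over ℝ^d: g_{μ,Σ}(μ) < g_{μ,Σ}(x) for every x ≠ μ. -/
open Matrix

/-- The principal submatrix of `A` with rows and columns in the set `w`. -/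
def cellSub {d : ℕ} (A : Matrix (Fin d) (Fin d) ℝ) (w : Finset (Fin d)) :
    Matrix ↥w ↥w ℝ :=
  A.submatrix (fun i => i.val) (fun i => i.val)

/-- `ℓ_w(x, μ, Σ) = ln det Σ^{(w)} + d^{(w)} ln(2π) + MD²(x, w, μ, Σ) + ∑_j q_j (1 − w_j)`,
where `w` is identified with the subset `{j : w_j = 1}` of the coordinates.
For empty `w` the determinant of the empty submatrix is `1` and the partial
Mahalanobis distance is `0`, matching the stated conventions. -/
noncomputable def cellL {d : ℕ} (q : Fin d → ℝ) (x μ : Fin d → ℝ)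
    (A : Matrix (Fin d) (Fin d) ℝ) (w : Finset (Fin d)) : ℝ :=
  Real.log (cellSub A w).det + (w.card : ℝ) * Real.log (2 * Real.pi)
    + (fun i : ↥w => x i.val - μ i.val) ⬝ᵥ
        ((cellSub A w)⁻¹).mulVec (fun i : ↥w => x i.val - μ i.val)
    + ∑ j ∈ wᶜ, q j

/-- `g_{μ,Σ}(x) = min_{w ∈ {0,1}^d} ℓ_w(x, μ, Σ)`. -/
noncomputable def cellG {d : ℕ} (q : Fin d → ℝ) (μ : Fin d → ℝ)
    (A : Matrix (Fin d) (Fin d) ℝ) (x : Fin d → ℝ) : ℝ :=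
  ⨅ w : Finset (Fin d), cellL q x μ A w

/-!
Only the Mahalanobis term of `ℓ_w(x, μ, Σ)` depends on `x`; it is a positive semidefinite form
in `x - μ`, vanishing at `μ`. Hence every `ℓ_w` is smallest at `x = μ`, and the full cell
`ℓ_univ` (where the form is definite) is strictly smallest there. The hypothesis at `x = μ` says
`g(μ) = ℓ_univ(μ)`. For `x ≠ μ`, if `g(x) = ℓ_w(x)` with `w` the full cell then
`ℓ_univ(μ) < ℓ_univ(x)`, and otherwise `ℓ_univ(μ) < ℓ_w(μ) ≤ ℓ_w(x)`.
-/

section CellL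

variable {d : ℕ} (q : Fin d → ℝ) (x μ : Fin d → ℝ) {A : Matrix (Fin d) (Fin d) ℝ}

lemma Matrix.PosDef.cellSub_inv (hA : A.PosDef) (w : Finset (Fin d)) : (cellSub A w)⁻¹.PosDef :=
  (hA.submatrix Subtype.val_injective).inv

lemma cellL_eq_cellL_self_add (A : Matrix (Fin d) (Fin d) ℝ) (w : Finset (Fin d)) :
    cellL q x μ A w = cellL q μ μ A w
      + (fun i : ↥w => x i - μ i) ⬝ᵥ (cellSub A w)⁻¹ *ᵥ (fun i : ↥w => x i - μ i) := by
  simp only [cellL, sub_self, Pi.zero_def.symm, zero_dotProduct]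
  ring

lemma cellL_self_le (hA : A.PosDef) (w : Finset (Fin d)) :
    cellL q μ μ A w ≤ cellL q x μ A w := by
  have hnonneg := (hA.cellSub_inv w).posSemidef.dotProduct_mulVec_nonneg
    (fun i : ↥w => x i - μ i)
  rw [star_trivial] at hnonneg
  rw [cellL_eq_cellL_self_add q x μ]
  linarith

lemma cellL_self_univ_lt (hA : A.PosDef) (hx : x ≠ μ) :
    cellL q μ μ A Finset.univ < cellL q x μ A Finset.univ := by
  have hne : (fun i : ↥(Finset.univ : Finset (Fin d)) => x i - μ i) ≠ 0 := by
    refine fun h => hx (funext fun j => sub_eq_zero.mp ?_)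
    exact congrFun h ⟨j, Finset.mem_univ j⟩
  have hpos := (hA.cellSub_inv Finset.univ).dotProduct_mulVec_pos hne
  rw [star_trivial] at hpos
  rw [cellL_eq_cellL_self_add q x μ]
  linarith

end CellL

lemma cellG_eq_cellL_of_forall_le {d : ℕ} {q x μ : Fin d → ℝ} {A : Matrix (Fin d) (Fin d) ℝ}
    {w₀ : Finset (Fin d)} (h : ∀ w, cellL q x μ A w₀ ≤ cellL q x μ A w) :
    cellG q μ A x = cellL q x μ A w₀ :=
  le_antisymm (Finite.ciInf_le _ w₀) (le_ciInf h)

/-- If there is `δ > 0` such that for every `x` with `‖x − μ‖ < δ` the minimum in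
`g_{μ,Σ}(x) = min_w ℓ_w(x, μ, Σ)` is attained only at the all-ones weight vector
(i.e. `ℓ_univ < ℓ_w` for every `w ≠ univ`), then `x = μ` is the unique minimizer
of `g_{μ,Σ}`. -/
theorem stmt_14 {d : ℕ} (q : Fin d → ℝ) (μ : Fin d → ℝ)
    (A : Matrix (Fin d) (Fin d) ℝ) (hA : A.PosDef)
    (δ : ℝ) (hδ : 0 < δ)
    (hattain : ∀ x : Fin d → ℝ, ‖x - μ‖ < δ →
      ∀ w : Finset (Fin d), w ≠ Finset.univ →
        cellL q x μ A Finset.univ < cellL q x μ A w) :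
    ∀ x : Fin d → ℝ, x ≠ μ → cellG q μ A μ < cellG q μ A x := by
  intro x hx
  have hμ : ∀ w ≠ Finset.univ, cellL q μ μ A Finset.univ < cellL q μ μ A w :=
    hattain μ (by simpa using hδ)
  have hgμ : cellG q μ A μ = cellL q μ μ A Finset.univ := by
    refine cellG_eq_cellL_of_forall_le fun w => ?_
    rcases eq_or_ne w Finset.univ with rfl | hw
    · exact le_rfl
    · exact (hμ w hw).le
  obtain ⟨w, hw⟩ := exists_eq_ciInf_of_finite (f := cellL q x μ A)
  rw [hgμ, cellG, ← hw]
  rcases eq_or_ne w Finset.univ with rfl | hne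
  · exact cellL_self_univ_lt q x μ hA hx
  · exact (hμ w hne).trans_le (cellL_self_le q x μ hA w)
end

section
/- Fix penalties q ∈ ℝ^d, μ ∈ ℝ^d, and a symmetric positive definite d×d matrix Σ, and define g_{μ,Σ} as below. Then (i) g_{μ,Σ} is point symmetric around μ: g_{μ,Σ}(μ + u) = g_{μ,Σ}(μ − u) for all u ∈ ℝ^d; and (ii) for every unit vector v ∈ ℝ^d, the function t ↦ g_{μ,Σ}(μ + t v) is weakly monotone increasing on [0, ∞). -/
/-
On the cell `w`, the term `ℓ_w(μ + u)` is a constant plus the quadratic form of the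
positive definite matrix `(Σ^{(w)})⁻¹` evaluated at the restriction `u^{(w)}`. A quadratic
form is even, and along a ray `u = t v` it equals `t²` times a nonnegative number, hence is
non-decreasing for `t ≥ 0`. Both properties hold for every one of the finitely many cells,
so they pass to the minimum `g_{μ,Σ}`.
-/

open Matrix

section QuadraticForm

variable {n : Type*} [Fintype n]

lemma Matrix.neg_dotProduct_mulVec_neg (M : Matrix n n ℝ) (a : n → ℝ) :
    -a ⬝ᵥ M *ᵥ -a = a ⬝ᵥ M *ᵥ a := by
  rw [mulVec_neg, neg_dotProduct, dotProduct_neg, neg_neg]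

lemma Matrix.smul_dotProduct_mulVec_smul (M : Matrix n n ℝ) (r : ℝ) (a : n → ℝ) :
    r • a ⬝ᵥ M *ᵥ (r • a) = r ^ 2 * (a ⬝ᵥ M *ᵥ a) := by
  rw [mulVec_smul, smul_dotProduct, dotProduct_smul, smul_eq_mul, smul_eq_mul]
  ring

lemma Matrix.PosSemidef.monotoneOn_smul_dotProduct_mulVec_smul {M : Matrix n n ℝ}
    (hM : M.PosSemidef) (a : n → ℝ) :
    MonotoneOn (fun r : ℝ => r • a ⬝ᵥ M *ᵥ (r • a)) (Set.Ici 0) := by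
  intro s hs t _ hst
  have ha : 0 ≤ a ⬝ᵥ M *ᵥ a := by simpa using hM.dotProduct_mulVec_nonneg a
  simp only [smul_dotProduct_mulVec_smul]
  exact mul_le_mul_of_nonneg_right (pow_le_pow_left₀ hs hst 2) ha

end QuadraticForm

section Cells

variable {d : ℕ} (q μ : Fin d → ℝ) {A : Matrix (Fin d) (Fin d) ℝ}

lemma cellSub_posDef (hA : A.PosDef) (w : Finset (Fin d)) : (cellSub A w).PosDef :=
  hA.submatrix Subtype.val_injective

lemma cellL_add_left (u : Fin d → ℝ) (w : Finset (Fin d)) :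
    cellL q (μ + u) μ A w =
      Real.log (cellSub A w).det + (w.card : ℝ) * Real.log (2 * Real.pi)
        + (fun i : ↥w => u i) ⬝ᵥ (cellSub A w)⁻¹ *ᵥ (fun i : ↥w => u i)
        + ∑ j ∈ wᶜ, q j := by
  simp [cellL]

lemma cellL_sub_left (u : Fin d → ℝ) (w : Finset (Fin d)) :
    cellL q (μ - u) μ A w = cellL q (μ + u) μ A w := by
  rw [sub_eq_add_neg, cellL_add_left, cellL_add_left]
  exact congrArg (· + _) (congrArg (_ + ·) (neg_dotProduct_mulVec_neg _ _))

lemma cellL_monotoneOn_smul (hA : A.PosDef) (v : Fin d → ℝ) (w : Finset (Fin d)) :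
    MonotoneOn (fun t : ℝ => cellL q (μ + t • v) μ A w) (Set.Ici 0) := by
  have hquad := (cellSub_posDef hA w).inv.posSemidef.monotoneOn_smul_dotProduct_mulVec_smul
    fun i : ↥w => v i
  intro s hs t ht hst
  have hrestrict (r : ℝ) : (fun i : ↥w => (r • v) i) = r • fun i : ↥w => v i := rfl
  have := hquad hs ht hst
  simp only [cellL_add_left, hrestrict] at this ⊢
  linarith

end Cells

/-- (i) `g_{μ,Σ}` is point symmetric around `μ`; (ii) along every unit direction
`v`, the function `t ↦ g_{μ,Σ}(μ + t v)` is weakly monotone increasing on `[0, ∞)`. -/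
theorem stmt_15 {d : ℕ} (q : Fin d → ℝ) (μ : Fin d → ℝ)
    (A : Matrix (Fin d) (Fin d) ℝ) (hA : A.PosDef) :
    (∀ u : Fin d → ℝ, cellG q μ A (μ + u) = cellG q μ A (μ - u)) ∧
    (∀ v : Fin d → ℝ, v ⬝ᵥ v = 1 →
      MonotoneOn (fun t : ℝ => cellG q μ A (μ + t • v)) (Set.Ici 0)) := by
  refine ⟨fun u => ?_, fun v _ s hs t ht hst => ?_⟩
  · simp only [cellG, cellL_sub_left]
  · exact ciInf_mono (Set.finite_range _).bddBelow
      fun w => cellL_monotoneOn_smul q μ hA v w hs ht hst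
end

section
/- Fix penalties q ∈ ℝ^d with q_j ≥ 0 for all j, and fix 0 < a ≤ 1. Then for every x, μ ∈ ℝ^d and every symmetric positive definite d×d matrix Σ whose smallest eigenvalue satisfies λ_d(Σ) ≥ a, one has d · ln a ≤ g_{μ,Σ}(x) ≤ ∑_{j=1}^d q_j. -/
open Matrix

/-!
The bound `λ_min(Σ) ≥ a` says that `Σ - a • 1` is positive semidefinite, and positive
semidefiniteness passes to principal submatrices. Hence every eigenvalue of every `Σ^{(w)}` is
at least `a`, so `ln det Σ^{(w)} ≥ |w| ln a ≥ d ln a` because `ln a ≤ 0`; the remaining terms of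
`ℓ_w` are nonnegative. The upper bound is the value of `ℓ_∅`.
-/

namespace Matrix

variable {n m : Type*} [Fintype n] [Fintype m] [DecidableEq n] [DecidableEq m]

theorem IsHermitian.posSemidef_sub_smul_one_iff {A : Matrix n n ℝ} (hA : A.IsHermitian) (a : ℝ) :
    (A - a • 1).PosSemidef ↔ ∀ v : n → ℝ, a * (v ⬝ᵥ v) ≤ v ⬝ᵥ A *ᵥ v := by
  have hquad (v : n → ℝ) : v ⬝ᵥ (A - a • 1) *ᵥ v = v ⬝ᵥ A *ᵥ v - a * (v ⬝ᵥ v) := by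
    simp only [sub_mulVec, smul_mulVec, one_mulVec, dotProduct_sub, dotProduct_smul, smul_eq_mul]
  simp only [posSemidef_iff_dotProduct_mulVec, star_trivial, hquad, sub_nonneg,
    hA.sub (isHermitian_one.smul (IsSelfAdjoint.all a)), true_and]

theorem le_dotProduct_mulVec_submatrix {A : Matrix n n ℝ} (hA : A.IsHermitian) {a : ℝ}
    (hAa : ∀ v : n → ℝ, a * (v ⬝ᵥ v) ≤ v ⬝ᵥ A *ᵥ v) {e : m → n} (he : Function.Injective e)
    (v : m → ℝ) : a * (v ⬝ᵥ v) ≤ v ⬝ᵥ A.submatrix e e *ᵥ v := by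
  have hsub : (A.submatrix e e - a • 1).PosSemidef := by
    rw [← submatrix_one e he]
    exact ((hA.posSemidef_sub_smul_one_iff a).2 hAa).submatrix e
  exact ((hA.submatrix e).posSemidef_sub_smul_one_iff a).1 hsub v

theorem IsHermitian.le_eigenvalues {A : Matrix n n ℝ} (hA : A.IsHermitian) {a : ℝ}
    (hAa : ∀ v : n → ℝ, a * (v ⬝ᵥ v) ≤ v ⬝ᵥ A *ᵥ v) (i : n) : a ≤ hA.eigenvalues i := by
  set u : n → ℝ := ⇑(hA.eigenvectorBasis i)
  have hu : u ⬝ᵥ u = 1 := by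
    have h := real_inner_self_eq_norm_sq (hA.eigenvectorBasis i)
    rw [hA.eigenvectorBasis.orthonormal.1 i, EuclideanSpace.inner_eq_star_dotProduct] at h
    simpa [u] using h
  simpa [hA.eigenvalues_eq i, hu, u] using hAa u

theorem IsHermitian.pow_card_le_det {A : Matrix n n ℝ} (hA : A.IsHermitian) {a : ℝ} (ha : 0 ≤ a)
    (hAa : ∀ v : n → ℝ, a * (v ⬝ᵥ v) ≤ v ⬝ᵥ A *ᵥ v) : a ^ Fintype.card n ≤ A.det := by
  rw [hA.det_eq_prod_eigenvalues, ← Finset.card_univ, ← Finset.prod_const]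
  exact Finset.prod_le_prod (fun _ _ ↦ ha) fun i _ ↦ by simpa using hA.le_eigenvalues hAa i

end Matrix

theorem mul_log_le_cellL {d : ℕ} {q : Fin d → ℝ} (hq : ∀ j, 0 ≤ q j) {a : ℝ} (ha0 : 0 < a)
    (ha1 : a ≤ 1) (x μ : Fin d → ℝ) {A : Matrix (Fin d) (Fin d) ℝ} (hA : A.PosDef)
    (hmin : ∀ v : Fin d → ℝ, a * (v ⬝ᵥ v) ≤ v ⬝ᵥ A *ᵥ v) (w : Finset (Fin d)) :
    (d : ℝ) * Real.log a ≤ cellL q x μ A w := by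
  have hB : (cellSub A w).PosDef := hA.submatrix Subtype.val_injective
  have hdet : a ^ w.card ≤ (cellSub A w).det := by
    simpa using hB.isHermitian.pow_card_le_det ha0.le
      (le_dotProduct_mulVec_submatrix hA.isHermitian hmin Subtype.val_injective)
  have hlogdet : (d : ℝ) * Real.log a ≤ Real.log (cellSub A w).det := calc
    (d : ℝ) * Real.log a ≤ w.card * Real.log a := by
      refine mul_le_mul_of_nonpos_right ?_ (Real.log_nonpos ha0.le ha1)
      exact_mod_cast w.card_le_univ |>.trans_eq (Fintype.card_fin d)
    _ = Real.log (a ^ w.card) := (Real.log_pow _ _).symm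
    _ ≤ Real.log (cellSub A w).det := Real.log_le_log (pow_pos ha0 _) hdet
  have hlog2pi : 0 ≤ (w.card : ℝ) * Real.log (2 * Real.pi) :=
    mul_nonneg w.card.cast_nonneg (Real.log_nonneg (by linarith [Real.pi_gt_three]))
  have hmahal := hB.inv.posSemidef.dotProduct_mulVec_nonneg fun i : ↥w => x i.val - μ i.val
  have hpen : 0 ≤ ∑ j ∈ wᶜ, q j := Finset.sum_nonneg fun j _ ↦ hq j
  rw [star_trivial] at hmahal
  unfold cellL
  linarith

theorem cellL_empty {d : ℕ} (q : Fin d → ℝ) (x μ : Fin d → ℝ) (A : Matrix (Fin d) (Fin d) ℝ) :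
    cellL q x μ A ∅ = ∑ j, q j := by
  simp [cellL, dotProduct]

/-- For nonnegative penalties `q`, `0 < a ≤ 1`, and any symmetric positive definite
`Σ` whose smallest eigenvalue is at least `a` (Rayleigh-quotient form), the function
`g_{μ,Σ}` is uniformly bounded: `d ln a ≤ g_{μ,Σ}(x) ≤ ∑_j q_j`. -/
theorem stmt_16 {d : ℕ} (q : Fin d → ℝ) (hq : ∀ j, 0 ≤ q j)
    (a : ℝ) (ha0 : 0 < a) (ha1 : a ≤ 1)
    (x μ : Fin d → ℝ) (A : Matrix (Fin d) (Fin d) ℝ) (hA : A.PosDef)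
    (hmin : ∀ v : Fin d → ℝ, a * (v ⬝ᵥ v) ≤ v ⬝ᵥ A.mulVec v) :
    (d : ℝ) * Real.log a ≤ cellG q μ A x ∧ cellG q μ A x ≤ ∑ j, q j :=
  ⟨le_ciInf (mul_log_le_cellL hq ha0 ha1 x μ hA hmin),
    (ciInf_le (Set.finite_range _).bddBelow ∅).trans_eq (cellL_empty q x μ A)⟩
end
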